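/- Let δ ∈ (0, 1/3 − 1/(3√2)), set β := (1 + 2·log(1−3δ))/(log(1−3δ) − log δ) and c := (log 3 − 1)/(log(1−3δ) − log δ). If T1 and T2 are balanced (unrooted) phylogenetic trees on the same leaf-set, both in class B_m or both in class C_m, then mast{T1, T2} ≥ 2^{β·m − c}. -/

import Mathlib

/-!
# Rooted binary phylogenetic trees

`RTree L` is the type of rooted binary trees with leaves labelled by elements of `L`:
every internal vertex has exactly two children (a left child and a right child), and
a tree with one leaf is a single vertex.
-/

inductive RTree (L : Type) : Type
  | leaf : L → RTree L
  | node : RTree L → RTree L → RTree L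

namespace RTree

variable {L : Type}

/-- The list of leaf labels of a rooted binary tree, read from left to right. -/
def leafList : RTree L → List L
  | leaf b => [b]
  | node l r => leafList l ++ leafList r

/-- The number of leaves of a rooted binary tree. -/
def numLeaves (T : RTree L) : ℕ := T.leafList.length

/-- The set of leaf labels of a rooted binary tree. -/
def leafSet (T : RTree L) : Set L := {b | b ∈ T.leafList}

/-- The height of a rooted binary tree: the maximum distance from the root to a leaf. -/
def height : RTree L → ℕ
  | leaf _ => 0
  | node l r => max (height l) (height r) + 1

/-- A rooted binary tree is balanced if all of its leaves are at the same distance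
from the root. -/
def IsBalanced : RTree L → Prop
  | leaf _ => True
  | node l r => IsBalanced l ∧ IsBalanced r ∧ height l = height r

/-- A rooted binary tree is phylogenetic if its leaves are labelled bijectively by a
finite set, i.e. all leaf labels are distinct. -/
def IsPhylo (T : RTree L) : Prop := T.leafList.Nodup

/-- `Embeds S T` is the subtree relation `S ⪯ T`: there is an injective map `f` from the
vertices of `S` to the vertices of `T` such that `f x = x` for every leaf `x` of `S`
(leaves being identified across trees by their labels) and
`f (x ∧ y) = f x ∧ f y` for all vertices `x`, `y` of `S`, where `∧` denotes the most
recent common ancestor.  Equivalently (for trees with distinct leaf labels), `S` is the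
restriction of `T` to the leaf set of `S`, up to rooted isomorphism; this structural
characterization is taken as the definition. -/
inductive Embeds : RTree L → RTree L → Prop
  | leaf (b : L) : Embeds (RTree.leaf b) (RTree.leaf b)
  | left {S l r : RTree L} : Embeds S l → Embeds S (RTree.node l r)
  | right {S l r : RTree L} : Embeds S r → Embeds S (RTree.node l r)
  | pair {s₁ s₂ l r : RTree L} :
      Embeds s₁ l → Embeds s₂ r → Embeds (RTree.node s₁ s₂) (RTree.node l r)
  | pair_swap {s₁ s₂ l r : RTree L} :
      Embeds s₁ r → Embeds s₂ l → Embeds (RTree.node s₁ s₂) (RTree.node l r)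

/-- `mast T₁ T₂` is the maximum cardinality of a subset `X ⊆ L(T₁) ∩ L(T₂)` such that
the restrictions `T₁|X` and `T₂|X` are isomorphic; equivalently, the maximum number of
leaves of a rooted binary phylogenetic tree `S` with `S ⪯ T₁` and `S ⪯ T₂`. -/
noncomputable def mast (T₁ T₂ : RTree L) : ℕ :=
  sSup {n | ∃ S : RTree L, S.IsPhylo ∧ Embeds S T₁ ∧ Embeds S T₂ ∧ S.numLeaves = n}

end RTree

/-!
# Unrooted binary phylogenetic trees, via rooted representatives

An unrooted binary phylogenetic tree (all internal vertices of degree 3) with at least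
two leaves is represented by any rooted binary tree obtained from it by subdividing an
edge and rooting there; conversely, suppressing the (degree-2) root of a rooted binary
tree yields an unrooted one.  Two rooted trees represent the same unrooted tree (i.e.
the unrooted trees are isomorphic by a graph isomorphism fixing every leaf label) iff
they are related by the equivalence relation `URel` generated by moving the root across
an edge together with (unordered) rooted isomorphism.
-/

namespace RTree

variable {L : Type}

/-- Rooted isomorphism of rooted binary trees, fixing all leaf labels (the two children
of a vertex are unordered). -/
inductive RIso : RTree L → RTree L → Prop
  | leaf (b : L) : RIso (RTree.leaf b) (RTree.leaf b)
  | pair {a b c d : RTree L} :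
      RIso a c → RIso b d → RIso (RTree.node a b) (RTree.node c d)
  | pair_swap {a b c d : RTree L} :
      RIso a d → RIso b c → RIso (RTree.node a b) (RTree.node c d)

/-- Moving the root of a rooted binary tree across one edge of the underlying unrooted
tree: this does not change the unrooted tree obtained by suppressing the root. -/
inductive RootMove : RTree L → RTree L → Prop
  | assoc (a b c : RTree L) :
      RootMove (RTree.node a (RTree.node b c)) (RTree.node (RTree.node a b) c)

/-- `URel S T` holds iff the unrooted binary trees obtained from `S` and `T` by
suppressing their roots are isomorphic by a graph isomorphism fixing every leaf label. -/
def URel (S T : RTree L) : Prop :=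
  Relation.EqvGen (fun X Y => RootMove X Y ∨ RIso X Y) S T

/-- `umast T₁ T₂` is the maximum agreement subtree size of the *unrooted* binary
phylogenetic trees represented by `T₁` and `T₂`: the maximum cardinality of a set
`X ⊆ L(T₁) ∩ L(T₂)` such that the unrooted restrictions `T₁|X` and `T₂|X` are
isomorphic (fixing leaf labels).  Equivalently, the maximum number of leaves of a
common unrooted subtree, given here by a pair of rooted representatives. -/
noncomputable def umast (T₁ T₂ : RTree L) : ℕ :=
  sSup {n | ∃ S₁ S₂ : RTree L, S₁.IsPhylo ∧ S₂.IsPhylo ∧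
    Embeds S₁ T₁ ∧ Embeds S₂ T₂ ∧ URel S₁ S₂ ∧ S₁.numLeaves = n}

end RTree

namespace RTree

variable {L : Type}

/-- An unrooted binary phylogenetic tree is in class `𝓑ₘ` if its center is a pair of
adjacent vertices and all leaves are at distance `m` from the center (it then has `2^m`
leaves).  Equivalently: rerooting it at its central edge yields a rooted tree whose two
subtrees are balanced of height `m - 1`. -/
def ClassB (m : ℕ) (T : RTree L) : Prop :=
  ∃ l r : RTree L, URel (RTree.node l r) T ∧
    l.IsBalanced ∧ r.IsBalanced ∧ l.height + 1 = m ∧ r.height + 1 = m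

/-- An unrooted binary phylogenetic tree is in class `𝓒ₘ` if its center is a single
vertex and all leaves are at distance `m` from the center (it then has `3·2^(m-1)`
leaves).  Equivalently: rerooting it at an edge incident to the center yields
`node a (node b c)` where the three branches `a`, `b`, `c` at the center are balanced
of height `m - 1`. -/
def ClassC (m : ℕ) (T : RTree L) : Prop :=
  ∃ a b c : RTree L, URel (RTree.node a (RTree.node b c)) T ∧
    a.IsBalanced ∧ b.IsBalanced ∧ c.IsBalanced ∧
    a.height + 1 = m ∧ b.height + 1 = m ∧ c.height + 1 = m

/-- An unrooted phylogenetic tree is balanced if all leaves are at the same distance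
from its center: it is a single vertex, or lies in some class `𝓑ₘ` or `𝓒ₘ`. -/
def UBalanced (T : RTree L) : Prop :=
  (∃ b : L, T = RTree.leaf b) ∨ ∃ m : ℕ, ClassB m T ∨ ClassC m T

end RTree

/-!
Root both trees at their centres. For rooted phylogenetic trees whose heights sum to `h` and
which share a set of `k` leaves there is a common agreement subtree with at least
`mastBound δ h k = ((2/3)·k·(1-3δ)^h)^p` leaves, `p = 1/log₂((1-3δ)/δ)`. This is proved by
induction: the two root splits cut the shared leaves into four cells. Either both cells of a
diagonal hold a `δ`-fraction of them, and we recurse into both; two levels of height are lost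
but, as `2·δ^p = (1-3δ)^p`, nothing of the bound. Or some child of one of the roots carries a
`(1-3δ)`-fraction, and we recurse there, losing one level.

For class `𝓑ₘ` this gives `mastBound δ (2m) (2^m) = 2^(βm - c)` at once. For class `𝓒ₘ`, some
branch at the centre of `T₁` shares a third of its `2^(m-1)` leaves with some branch at the
centre of `T₂`. Rerooting both trees there, the bound for these two branches plus the bound for
the leaves outside both is again at least `2^(βm - c)`, because `(1/6)^p + (2/3)^p ≥ 1` for
`p ≤ 1/2`, i.e. for `δ ≤ 1/7`.
-/

namespace RTree

variable {L : Type}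

theorem Embeds.leafList_subset {S T : RTree L} (h : Embeds S T) : S.leafList ⊆ T.leafList := by
  induction h with
  | leaf => exact List.Subset.refl _
  | left _ ih => exact List.subset_append_of_subset_left _ ih
  | right _ ih => exact List.subset_append_of_subset_right _ ih
  | pair _ _ ih₁ ih₂ =>
    exact List.append_subset.2
      ⟨List.subset_append_of_subset_left _ ih₁, List.subset_append_of_subset_right _ ih₂⟩
  | pair_swap _ _ ih₁ ih₂ =>
    exact List.append_subset.2
      ⟨List.subset_append_of_subset_right _ ih₁, List.subset_append_of_subset_left _ ih₂⟩

theorem Embeds.numLeaves_le {S T : RTree L} (h : Embeds S T) : S.numLeaves ≤ T.numLeaves := by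
  induction h <;> simp only [numLeaves, leafList, List.length_append] at * <;> omega

theorem embeds_leaf_of_mem {b : L} {T : RTree L} (h : b ∈ T.leafList) : Embeds (leaf b) T := by
  induction T with
  | leaf c =>
    obtain rfl : b = c := by simpa [leafList] using h
    exact Embeds.leaf b
  | node l r ihl ihr =>
    rcases List.mem_append.1 h with h | h
    · exact Embeds.left (ihl h)
    · exact Embeds.right (ihr h)

theorem numLeaves_node (l r : RTree L) : (node l r).numLeaves = l.numLeaves + r.numLeaves :=
  List.length_append

theorem isPhylo_node {l r : RTree L} :
    (node l r).IsPhylo ↔ l.IsPhylo ∧ r.IsPhylo ∧ l.leafList.Disjoint r.leafList := by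
  simp only [IsPhylo, leafList, List.nodup_append, List.Disjoint]
  grind

theorem IsBalanced.numLeaves_eq {T : RTree L} (h : T.IsBalanced) : T.numLeaves = 2 ^ T.height := by
  induction T with
  | leaf => rfl
  | node l r ihl ihr =>
    obtain ⟨hl, hr, hlr⟩ := h
    rw [numLeaves_node, ihl hl, ihr hr, height, hlr, max_self, pow_succ, mul_two]

theorem RIso.refl (T : RTree L) : RIso T T := by
  induction T with
  | leaf b => exact RIso.leaf b
  | node l r ihl ihr => exact RIso.pair ihl ihr

theorem RIso.symm {S T : RTree L} (h : RIso S T) : RIso T S := by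
  induction h with
  | leaf b => exact RIso.leaf b
  | pair _ _ ih₁ ih₂ => exact RIso.pair ih₁ ih₂
  | pair_swap _ _ ih₁ ih₂ => exact RIso.pair_swap ih₂ ih₁

theorem RIso.swap (l r : RTree L) : RIso (node l r) (node r l) :=
  RIso.pair_swap (RIso.refl l) (RIso.refl r)

theorem RIso.leafList_perm {S T : RTree L} (h : RIso S T) : S.leafList.Perm T.leafList := by
  induction h with
  | leaf => exact List.Perm.refl _
  | pair _ _ ih₁ ih₂ => exact ih₁.append ih₂
  | pair_swap _ _ ih₁ ih₂ => exact (ih₁.append ih₂).trans List.perm_append_comm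

theorem Embeds.of_rIso {S T T' : RTree L} (hS : Embeds S T) (h : RIso T T') : Embeds S T' := by
  induction h generalizing S with
  | leaf => exact hS
  | pair _ _ ih₁ ih₂ =>
    cases hS with
    | left h => exact Embeds.left (ih₁ h)
    | right h => exact Embeds.right (ih₂ h)
    | pair g₁ g₂ => exact Embeds.pair (ih₁ g₁) (ih₂ g₂)
    | pair_swap g₁ g₂ => exact Embeds.pair_swap (ih₂ g₁) (ih₁ g₂)
  | pair_swap _ _ ih₁ ih₂ =>
    cases hS with
    | left h => exact Embeds.right (ih₁ h)
    | right h => exact Embeds.left (ih₂ h)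
    | pair g₁ g₂ => exact Embeds.pair_swap (ih₁ g₁) (ih₂ g₂)
    | pair_swap g₁ g₂ => exact Embeds.pair (ih₂ g₁) (ih₁ g₂)

theorem URel.refl (T : RTree L) : URel T T := Relation.EqvGen.refl T

theorem URel.symm {S T : RTree L} (h : URel S T) : URel T S := Relation.EqvGen.symm _ _ h

theorem URel.trans {S T U : RTree L} (h₁ : URel S T) (h₂ : URel T U) : URel S U :=
  Relation.EqvGen.trans _ _ _ h₁ h₂

theorem URel.of_rIso {S T : RTree L} (h : RIso S T) : URel S T :=
  Relation.EqvGen.rel _ _ (Or.inr h)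

theorem URel.assoc (a b c : RTree L) : URel (node a (node b c)) (node (node a b) c) :=
  Relation.EqvGen.rel _ _ (Or.inl (RootMove.assoc a b c))

theorem URel.rotate {a b c T : RTree L} (h : URel (node a (node b c)) T) :
    URel (node b (node c a)) T :=
  ((URel.assoc b c a).trans (URel.of_rIso (RIso.swap _ _))).trans h

theorem URel.leafList_perm {S T : RTree L} (h : URel S T) : S.leafList.Perm T.leafList := by
  induction h with
  | rel _ _ h =>
    rcases h with ⟨_, _, _⟩ | h
    · simp only [leafList, List.append_assoc, List.Perm.refl]
    · exact h.leafList_perm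
  | refl => exact List.Perm.refl _
  | symm _ _ _ ih => exact ih.symm
  | trans _ _ _ _ _ ih₁ ih₂ => exact ih₁.trans ih₂

theorem URel.numLeaves_eq {S T : RTree L} (h : URel S T) : S.numLeaves = T.numLeaves :=
  h.leafList_perm.length_eq

theorem URel.isPhylo_iff {S T : RTree L} (h : URel S T) : S.IsPhylo ↔ T.IsPhylo :=
  h.leafList_perm.nodup_iff

theorem RootMove.exists_urel_embeds {a b c S : RTree L} (hS : Embeds S (node a (node b c))) :
    ∃ S', URel S S' ∧ Embeds S' (node (node a b) c) := by
  have of_pair : ∀ {s₁ s₂}, Embeds s₁ a → Embeds s₂ (node b c) →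
      ∃ S', URel (node s₁ s₂) S' ∧ Embeds S' (node (node a b) c) := by
    intro s₁ s₂ h₁ h₂
    cases h₂ with
    | left g => exact ⟨_, .refl _, .left (.pair h₁ g)⟩
    | right g => exact ⟨_, .refl _, .pair (.left h₁) g⟩
    | @pair t₁ t₂ _ _ g₁ g₂ => exact ⟨_, .assoc s₁ t₁ t₂, .pair (.pair h₁ g₁) g₂⟩
    | @pair_swap t₁ t₂ _ _ g₁ g₂ =>
      exact ⟨_, (URel.of_rIso (.pair (.refl s₁) (.swap t₁ t₂))).trans (.assoc s₁ t₂ t₁),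
        .pair (.pair h₁ g₂) g₁⟩
  cases hS with
  | left h => exact ⟨S, .refl S, .left (.left h)⟩
  | right h =>
    refine ⟨S, .refl S, ?_⟩
    cases h with
    | left h => exact .left (.right h)
    | right h => exact .right h
    | pair g₁ g₂ => exact .pair (.right g₁) g₂
    | pair_swap g₁ g₂ => exact .pair_swap g₁ (.right g₂)
  | pair h₁ h₂ => exact of_pair h₁ h₂
  | pair_swap h₁ h₂ =>
    obtain ⟨S', hS', hS'T⟩ := of_pair h₂ h₁
    exact ⟨S', (URel.of_rIso (.swap _ _)).trans hS', hS'T⟩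

theorem RootMove.exists_urel_embeds_symm {a b c S : RTree L}
    (hS : Embeds S (node (node a b) c)) : ∃ S', URel S S' ∧ Embeds S' (node a (node b c)) := by
  obtain ⟨S', hS', hS'T⟩ := exists_urel_embeds (hS.of_rIso (.pair_swap (.swap a b) (.refl c)))
  exact ⟨S', hS', hS'T.of_rIso (.pair_swap (.swap c b) (.refl a))⟩

theorem URel.exists_urel_embeds {T T' S : RTree L} (h : URel T T') (hS : Embeds S T) :
    ∃ S', URel S S' ∧ Embeds S' T' := by
  suffices ∀ S, (Embeds S T → ∃ S', URel S S' ∧ Embeds S' T') ∧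
      (Embeds S T' → ∃ S', URel S S' ∧ Embeds S' T) from (this S).1 hS
  clear hS S
  induction h with
  | rel _ _ h =>
    rcases h with ⟨_, _, _⟩ | h
    · exact fun S => ⟨RootMove.exists_urel_embeds, RootMove.exists_urel_embeds_symm⟩
    · exact fun S =>
        ⟨fun hS => ⟨S, .refl S, hS.of_rIso h⟩, fun hS => ⟨S, .refl S, hS.of_rIso h.symm⟩⟩
  | refl => exact fun S => ⟨fun hS => ⟨S, .refl S, hS⟩, fun hS => ⟨S, .refl S, hS⟩⟩
  | symm _ _ _ ih => exact fun S => (ih S).symm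
  | trans _ _ _ _ _ ih₁ ih₂ =>
    refine fun S => ⟨fun hS => ?_, fun hS => ?_⟩
    · obtain ⟨S', hSS', hS'⟩ := (ih₁ S).1 hS
      obtain ⟨S'', hS'S'', hS''⟩ := (ih₂ S').1 hS'
      exact ⟨S'', hSS'.trans hS'S'', hS''⟩
    · obtain ⟨S', hSS', hS'⟩ := (ih₂ S).2 hS
      obtain ⟨S'', hS'S'', hS''⟩ := (ih₁ S').2 hS'
      exact ⟨S'', hSS'.trans hS'S'', hS''⟩

def HasAgreementSubtree (T₁ T₂ : RTree L) (n : ℝ) : Prop :=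
  ∃ S : RTree L, S.IsPhylo ∧ Embeds S T₁ ∧ Embeds S T₂ ∧ n ≤ S.numLeaves

theorem HasAgreementSubtree.mono {T₁ T₂ : RTree L} {n n' : ℝ} (h : HasAgreementSubtree T₁ T₂ n)
    (hn : n' ≤ n) : HasAgreementSubtree T₁ T₂ n' :=
  let ⟨S, hS, h₁, h₂, hSn⟩ := h
  ⟨S, hS, h₁, h₂, hn.trans hSn⟩

theorem HasAgreementSubtree.of_embeds {T₁ T₂ T₁' T₂' : RTree L} {n : ℝ}
    (h : HasAgreementSubtree T₁ T₂ n) (h₁ : ∀ S, Embeds S T₁ → Embeds S T₁')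
    (h₂ : ∀ S, Embeds S T₂ → Embeds S T₂') : HasAgreementSubtree T₁' T₂' n :=
  let ⟨S, hS, hS₁, hS₂, hSn⟩ := h
  ⟨S, hS, h₁ S hS₁, h₂ S hS₂, hSn⟩

theorem hasAgreementSubtree_one {T₁ T₂ : RTree L} {b : L} (h₁ : b ∈ T₁.leafList)
    (h₂ : b ∈ T₂.leafList) : HasAgreementSubtree T₁ T₂ 1 :=
  ⟨leaf b, List.nodup_singleton b, embeds_leaf_of_mem h₁, embeds_leaf_of_mem h₂, by
    simp [numLeaves, leafList]⟩

theorem isPhylo_node_of_embeds {S₁ S₂ l r : RTree L} (hd : l.leafList.Disjoint r.leafList)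
    (hS₁ : S₁.IsPhylo) (hS₂ : S₂.IsPhylo) (h₁ : Embeds S₁ l) (h₂ : Embeds S₂ r) :
    (node S₁ S₂).IsPhylo :=
  isPhylo_node.2 ⟨hS₁, hS₂, fun _ hx hy => hd (h₁.leafList_subset hx) (h₂.leafList_subset hy)⟩

theorem HasAgreementSubtree.pair {l₁ r₁ l₂ r₂ : RTree L} {a b : ℝ}
    (hd : l₁.leafList.Disjoint r₁.leafList) (hl : HasAgreementSubtree l₁ l₂ a)
    (hr : HasAgreementSubtree r₁ r₂ b) : HasAgreementSubtree (node l₁ r₁) (node l₂ r₂) (a + b) :=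
  let ⟨S₁, hS₁, h₁, h₁', ha⟩ := hl
  let ⟨S₂, hS₂, h₂, h₂', hb⟩ := hr
  ⟨node S₁ S₂, isPhylo_node_of_embeds hd hS₁ hS₂ h₁ h₂, .pair h₁ h₂, .pair h₁' h₂', by
    rw [numLeaves_node, Nat.cast_add]; exact add_le_add ha hb⟩

theorem HasAgreementSubtree.pair_swap {l₁ r₁ l₂ r₂ : RTree L} {a b : ℝ}
    (hd : l₁.leafList.Disjoint r₁.leafList) (hl : HasAgreementSubtree l₁ r₂ a)
    (hr : HasAgreementSubtree r₁ l₂ b) : HasAgreementSubtree (node l₁ r₁) (node l₂ r₂) (a + b) :=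
  (hl.pair hd hr).of_embeds (fun _ => id) (fun _ hS => hS.of_rIso (.swap _ _))

theorem HasAgreementSubtree.le_umast {R₁ R₂ T₁ T₂ : RTree L} {n : ℝ}
    (h : HasAgreementSubtree R₁ R₂ n) (hu₁ : URel R₁ T₁) (hu₂ : URel R₂ T₂) :
    n ≤ umast T₁ T₂ := by
  obtain ⟨S, hS, h₁, h₂, hSn⟩ := h
  obtain ⟨S₁, hSS₁, hS₁⟩ := hu₁.exists_urel_embeds h₁
  obtain ⟨S₂, hSS₂, hS₂⟩ := hu₂.exists_urel_embeds h₂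
  have hbdd : BddAbove {n | ∃ S₁ S₂ : RTree L, S₁.IsPhylo ∧ S₂.IsPhylo ∧
      Embeds S₁ T₁ ∧ Embeds S₂ T₂ ∧ URel S₁ S₂ ∧ S₁.numLeaves = n} :=
    ⟨T₁.numLeaves, fun _ ⟨_, _, _, _, h, _, _, hn⟩ => hn ▸ h.numLeaves_le⟩
  exact hSn.trans (Nat.cast_le.2 (le_csSup hbdd ⟨S₁, S₂, hSS₁.isPhylo_iff.1 hS,
    hSS₂.isPhylo_iff.1 hS, hS₁, hS₂, hSS₁.symm.trans hSS₂, hSS₁.numLeaves_eq.symm⟩))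

end RTree

section Bound

open Real

noncomputable def mastExponent (δ : ℝ) : ℝ := (logb 2 (1 - 3 * δ) - logb 2 δ)⁻¹

noncomputable def mastBound (δ : ℝ) (h : ℕ) (k : ℝ) : ℝ :=
  (2 / 3 * k * (1 - 3 * δ) ^ h) ^ mastExponent δ

variable {δ : ℝ}

theorem mastExponent_pos (hδ₀ : 0 < δ) (hδ : δ < 1 / 4) : 0 < mastExponent δ :=
  inv_pos.2 (sub_pos.2 (logb_lt_logb one_lt_two hδ₀ (by linarith)))

theorem mastExponent_le_half (hδ₀ : 0 < δ) (hδ : δ ≤ 1 / 7) : mastExponent δ ≤ 1 / 2 := by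
  have h4 : logb 2 4 ≤ logb 2 ((1 - 3 * δ) / δ) :=
    logb_le_logb_of_le one_lt_two (by norm_num) ((le_div_iff₀ hδ₀).2 (by linarith))
  rw [logb_div (by linarith) hδ₀.ne', show (4 : ℝ) = 2 ^ (2 : ℝ) by norm_num,
    logb_rpow two_pos (by norm_num)] at h4
  rw [mastExponent, inv_le_comm₀ (by linarith) one_half_pos]
  linarith

/-- The exponent is chosen exactly so that this holds. -/
theorem two_mul_rpow_mastExponent (hδ₀ : 0 < δ) (hδ : δ < 1 / 4) :
    2 * δ ^ mastExponent δ = (1 - 3 * δ) ^ mastExponent δ := by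
  have rpow_eq : ∀ x : ℝ, 0 < x → x ^ mastExponent δ = 2 ^ (logb 2 x * mastExponent δ) :=
    fun x hx => by rw [rpow_mul two_pos.le, rpow_logb two_pos one_lt_two.ne' hx]
  have hexp : logb 2 (1 - 3 * δ) * mastExponent δ = 1 + logb 2 δ * mastExponent δ := by
    have hP := (inv_pos.1 (mastExponent_pos hδ₀ hδ)).ne'
    rw [mastExponent]
    field_simp
    ring
  rw [rpow_eq δ hδ₀, rpow_eq _ (by linarith), hexp, rpow_add two_pos, rpow_one]

theorem one_le_rpow_sixth_add_rpow_two_thirds {p : ℝ} (hp : p ≤ 1 / 2) :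
    1 ≤ (1 / 6 : ℝ) ^ p + (2 / 3 : ℝ) ^ p := by
  have h₁ : (1 / 5 : ℝ) ≤ (1 / 6 : ℝ) ^ (1 / 2 : ℝ) := by
    rw [← sqrt_eq_rpow, le_sqrt (by norm_num) (by norm_num)]; norm_num
  have h₂ : (4 / 5 : ℝ) ≤ (2 / 3 : ℝ) ^ (1 / 2 : ℝ) := by
    rw [← sqrt_eq_rpow, le_sqrt (by norm_num) (by norm_num)]; norm_num
  linarith [rpow_le_rpow_of_exponent_ge (by norm_num : (0 : ℝ) < 1 / 6) (by norm_num) hp,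
    rpow_le_rpow_of_exponent_ge (by norm_num : (0 : ℝ) < 2 / 3) (by norm_num) hp]

theorem mastBound_mul (hδ : δ < 1 / 3) (h : ℕ) {c k : ℝ} (hc : 0 ≤ c) (hk : 0 ≤ k) :
    mastBound δ h (c * k) = c ^ mastExponent δ * mastBound δ h k := by
  have : 0 ≤ 1 - 3 * δ := by linarith
  rw [mastBound, mastBound, ← mul_rpow hc (by positivity)]
  ring_nf

theorem mastBound_succ (h : ℕ) (k : ℝ) :
    mastBound δ (h + 1) k = mastBound δ h ((1 - 3 * δ) * k) := by
  rw [mastBound, mastBound]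
  ring_nf

theorem mastBound_succ_eq_two_mul (hδ₀ : 0 < δ) (hδ : δ < 1 / 4) (h : ℕ) {k : ℝ} (hk : 0 ≤ k) :
    mastBound δ (h + 1) k = 2 * mastBound δ h (δ * k) := by
  rw [mastBound_succ, mastBound_mul (by linarith) h (by linarith) hk,
    mastBound_mul (by linarith) h hδ₀.le hk, ← two_mul_rpow_mastExponent hδ₀ hδ, mul_assoc]

theorem mastBound_mono (hδ₀ : 0 < δ) (hδ : δ < 1 / 4) {h h' : ℕ} {k k' : ℝ} (hk : 0 ≤ k)
    (hkk' : k ≤ k') (hh : h' ≤ h) : mastBound δ h k ≤ mastBound δ h' k' := by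
  have hτ₀ : 0 ≤ 1 - 3 * δ := by linarith
  refine rpow_le_rpow (by positivity) ?_ (mastExponent_pos hδ₀ hδ).le
  have hτ : (1 - 3 * δ) ^ h ≤ (1 - 3 * δ) ^ h' := pow_le_pow_of_le_one hτ₀ (by linarith) hh
  have : 0 ≤ 2 / 3 * k' := by linarith
  gcongr

theorem mastBound_one_le (hδ₀ : 0 < δ) (hδ : δ < 1 / 4) (h : ℕ) : mastBound δ h 1 ≤ 1 := by
  have hτ₀ : 0 ≤ 1 - 3 * δ := by linarith
  refine rpow_le_one (by positivity) ?_ (mastExponent_pos hδ₀ hδ).le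
  have := pow_le_one₀ hτ₀ (by linarith : 1 - 3 * δ ≤ 1) (n := h)
  linarith

theorem mastBound_le_of_branch (hδ₀ : 0 < δ) (hδ : δ < 1 / 4) {h h' : ℕ} {k s : ℝ}
    (hh : h + 1 ≤ h') (hk : 0 ≤ k) (hs : (1 - 3 * δ) * k ≤ s) :
    mastBound δ h' k ≤ mastBound δ h s :=
  calc mastBound δ h' k ≤ mastBound δ (h + 1) k := mastBound_mono hδ₀ hδ hk le_rfl hh
    _ = mastBound δ h ((1 - 3 * δ) * k) := mastBound_succ h k
    _ ≤ mastBound δ h s := mastBound_mono hδ₀ hδ (by nlinarith) hs le_rfl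

theorem mastBound_le_add_of_diag (hδ₀ : 0 < δ) (hδ : δ < 1 / 4) {h h₁ h₂ : ℕ} {k a d : ℝ}
    (hh₁ : h₁ + 2 ≤ h) (hh₂ : h₂ + 2 ≤ h) (hk : 0 ≤ k) (ha : δ * k ≤ a) (hd : δ * k ≤ d) :
    mastBound δ h k ≤ mastBound δ h₁ a + mastBound δ h₂ d := by
  have hδk : 0 ≤ δ * k := by positivity
  have h₁' : mastBound δ h k ≤ 2 * mastBound δ h₁ (δ * k) :=
    (mastBound_succ_eq_two_mul hδ₀ hδ h₁ hk).symm ▸ mastBound_mono hδ₀ hδ hk le_rfl (by omega)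
  have h₂' : mastBound δ h k ≤ 2 * mastBound δ h₂ (δ * k) :=
    (mastBound_succ_eq_two_mul hδ₀ hδ h₂ hk).symm ▸ mastBound_mono hδ₀ hδ hk le_rfl (by omega)
  linarith [mastBound_mono hδ₀ hδ hδk ha (le_refl h₁), mastBound_mono hδ₀ hδ hδk hd (le_refl h₂)]

theorem mastBound_le_add_of_center (hδ₀ : 0 < δ) (hδ : δ ≤ 1 / 7) (n : ℕ) {k₁ k₂ : ℝ}
    (hk₁ : 2 ^ n / 3 ≤ k₁) (hk₂ : 4 / 3 * 2 ^ n ≤ k₂) :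
    mastBound δ (2 * n + 2) (2 ^ (n + 1)) ≤ mastBound δ (2 * n) k₁ + mastBound δ (2 * n + 2) k₂ := by
  have hδ' : δ < 1 / 4 := by linarith
  have hτ : 0 ≤ 1 - 3 * δ := by linarith
  have h2n : (0 : ℝ) ≤ 2 ^ (n + 1) := by positivity
  calc mastBound δ (2 * n + 2) (2 ^ (n + 1))
      ≤ ((1 / 6 : ℝ) ^ mastExponent δ + (2 / 3 : ℝ) ^ mastExponent δ) *
          mastBound δ (2 * n + 2) (2 ^ (n + 1)) :=
        le_mul_of_one_le_left (rpow_nonneg (by positivity) _)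
          (one_le_rpow_sixth_add_rpow_two_thirds (mastExponent_le_half hδ₀ hδ))
    _ = mastBound δ (2 * n + 2) (1 / 6 * 2 ^ (n + 1)) +
          mastBound δ (2 * n + 2) (2 / 3 * 2 ^ (n + 1)) := by
        rw [mastBound_mul (by linarith) _ (by norm_num) h2n,
          mastBound_mul (by linarith) _ (by norm_num) h2n, add_mul]
    _ ≤ mastBound δ (2 * n) k₁ + mastBound δ (2 * n + 2) k₂ := by
        gcongr
        · exact mastBound_mono hδ₀ hδ' (by positivity) (by rw [pow_succ]; linarith) (by omega)
        · exact mastBound_mono hδ₀ hδ' (by positivity) (by rw [pow_succ]; linarith) le_rfl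

theorem two_rpow_eq_mastBound (hδ₀ : 0 < δ) (hδ : δ < 1 / 4) (m : ℕ) :
    (2 : ℝ) ^ ((1 + 2 * logb 2 (1 - 3 * δ)) / (logb 2 (1 - 3 * δ) - logb 2 δ) * m -
        (logb 2 3 - 1) / (logb 2 (1 - 3 * δ) - logb 2 δ)) = mastBound δ (2 * m) (2 ^ m) := by
  have hP := (inv_pos.1 (mastExponent_pos hδ₀ hδ)).ne'
  have hτ : 0 < 1 - 3 * δ := by linarith
  have hbase : (0 : ℝ) < 2 / 3 * 2 ^ m * (1 - 3 * δ) ^ (2 * m) := by positivity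
  have hlog : logb 2 (2 / 3 * 2 ^ m * (1 - 3 * δ) ^ (2 * m)) =
      1 - logb 2 3 + m + 2 * m * logb 2 (1 - 3 * δ) := by
    rw [logb_mul (by positivity) (by positivity), logb_mul (by norm_num) (by positivity),
      logb_pow, logb_pow, logb_div (by norm_num) (by norm_num), logb_self_eq_one one_lt_two]
    push_cast
    ring
  rw [mastBound, ← rpow_logb two_pos one_lt_two.ne' hbase, ← rpow_mul two_pos.le, hlog,
    mastExponent]
  congr 1
  field_simp
  ring

theorem diag_or_antidiag_or_margin {δ a b c d k : ℝ} (hδ : 0 ≤ δ) (hk : a + b + c + d = k)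
    (hk₀ : 0 ≤ k) :
    (δ * k ≤ a ∧ δ * k ≤ d) ∨ (δ * k ≤ b ∧ δ * k ≤ c) ∨ (1 - 3 * δ) * k ≤ a + b ∨
      (1 - 3 * δ) * k ≤ c + d ∨ (1 - 3 * δ) * k ≤ a + c ∨ (1 - 3 * δ) * k ≤ b + d := by
  have := mul_nonneg hδ hk₀
  by_contra! h
  obtain ⟨had, hbc, hab, hcd, hac, hbd⟩ := h
  rcases le_or_gt (δ * k) a with ha | ha <;> rcases le_or_gt (δ * k) b with hb | hb
  · linarith [had ha, hbc hb]
  · linarith [had ha]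
  · linarith [hbc hb]
  · linarith

end Bound

namespace Finset

theorem card_eq_card_inter_add_card_inter {α : Type*} [DecidableEq α] {X s t : Finset α}
    (hX : X ⊆ s ∪ t) (hst : Disjoint s t) : #X = #(X ∩ s) + #(X ∩ t) := by
  rw [← card_union_of_disjoint (hst.mono inter_subset_right inter_subset_right),
    ← inter_union_distrib_left, inter_eq_left.2 hX]

end Finset

namespace RTree

open Finset

variable {L : Type} [DecidableEq L] {δ : ℝ}

def leafFinset (T : RTree L) : Finset L := T.leafList.toFinset

@[simp] theorem mem_leafFinset {T : RTree L} {x : L} : x ∈ T.leafFinset ↔ x ∈ T.leafList :=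
  List.mem_toFinset

theorem leafFinset_node (l r : RTree L) : (node l r).leafFinset = l.leafFinset ∪ r.leafFinset :=
  List.toFinset_append

theorem IsPhylo.card_leafFinset {T : RTree L} (h : T.IsPhylo) : #T.leafFinset = T.numLeaves :=
  List.toFinset_card_of_nodup h

theorem disjoint_leafFinset_of_isPhylo_node {l r : RTree L} (h : (node l r).IsPhylo) :
    Disjoint l.leafFinset r.leafFinset :=
  List.disjoint_toFinset_iff_disjoint.2 (isPhylo_node.1 h).2.2

theorem URel.leafFinset_eq {S T : RTree L} (h : URel S T) : S.leafFinset = T.leafFinset :=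
  List.toFinset_eq_of_perm _ _ h.leafList_perm

theorem card_le_one_of_subset_leafFinset_leaf {b : L} {X : Finset L}
    (hX : X ⊆ (leaf b).leafFinset) : #X ≤ 1 :=
  (card_le_card hX).trans (by simp [leafFinset, leafList])

theorem card_eq_card_inter_leafFinset_add {l r : RTree L} {Y : Finset L}
    (h : (node l r).IsPhylo) (hY : Y ⊆ (node l r).leafFinset) :
    #Y = #(Y ∩ l.leafFinset) + #(Y ∩ r.leafFinset) :=
  Finset.card_eq_card_inter_add_card_inter (leafFinset_node l r ▸ hY)
    (disjoint_leafFinset_of_isPhylo_node h)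

theorem le_card_diag_or_antidiag_or_margin (hδ : 0 ≤ δ) {A₁ B₁ A₂ B₂ : RTree L} {X : Finset L}
    (hT₁ : (node A₁ B₁).IsPhylo) (hT₂ : (node A₂ B₂).IsPhylo)
    (hX₁ : X ⊆ (node A₁ B₁).leafFinset) (hX₂ : X ⊆ (node A₂ B₂).leafFinset) :
    (δ * #X ≤ #(X ∩ A₁.leafFinset ∩ A₂.leafFinset) ∧
        δ * #X ≤ #(X ∩ B₁.leafFinset ∩ B₂.leafFinset)) ∨
      (δ * #X ≤ #(X ∩ A₁.leafFinset ∩ B₂.leafFinset) ∧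
        δ * #X ≤ #(X ∩ B₁.leafFinset ∩ A₂.leafFinset)) ∨
      (1 - 3 * δ) * #X ≤ #(X ∩ A₁.leafFinset) ∨ (1 - 3 * δ) * #X ≤ #(X ∩ B₁.leafFinset) ∨
      (1 - 3 * δ) * #X ≤ #(X ∩ A₂.leafFinset) ∨ (1 - 3 * δ) * #X ≤ #(X ∩ B₂.leafFinset) := by
  have hX := card_eq_card_inter_leafFinset_add hT₁ hX₁
  rw [card_eq_card_inter_leafFinset_add hT₂ (inter_subset_left.trans hX₂) (Y := X ∩ A₁.leafFinset),
    card_eq_card_inter_leafFinset_add hT₂ (inter_subset_left.trans hX₂) (Y := X ∩ B₁.leafFinset)]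
    at hX ⊢
  rw [card_eq_card_inter_leafFinset_add hT₁ (inter_subset_left.trans hX₁) (Y := X ∩ A₂.leafFinset),
    card_eq_card_inter_leafFinset_add hT₁ (inter_subset_left.trans hX₁) (Y := X ∩ B₂.leafFinset),
    inter_right_comm X A₂.leafFinset, inter_right_comm X A₂.leafFinset,
    inter_right_comm X B₂.leafFinset, inter_right_comm X B₂.leafFinset]
  push_cast
  exact diag_or_antidiag_or_margin hδ (by rw [hX]; push_cast; ring) (Nat.cast_nonneg _)

theorem hasAgreementSubtree_mastBound (hδ₀ : 0 < δ) (hδ : δ < 1 / 4) (h : ℕ)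
    {T₁ T₂ : RTree L} {X : Finset L} (hT₁ : T₁.IsPhylo) (hT₂ : T₂.IsPhylo)
    (hh : T₁.height + T₂.height ≤ h) (hX : X.Nonempty) (hX₁ : X ⊆ T₁.leafFinset)
    (hX₂ : X ⊆ T₂.leafFinset) : HasAgreementSubtree T₁ T₂ (mastBound δ h #X) := by
  induction h using Nat.strong_induction_on generalizing T₁ T₂ X with
  | _ h ih =>
  obtain ⟨x, hx⟩ := hX
  by_cases hX1 : #X ≤ 1
  · rw [le_antisymm hX1 (card_pos.2 ⟨x, hx⟩), Nat.cast_one]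
    exact (hasAgreementSubtree_one (mem_leafFinset.1 (hX₁ hx)) (mem_leafFinset.1 (hX₂ hx))).mono
      (mastBound_one_le hδ₀ hδ h)
  rcases T₁ with b₁ | ⟨A₁, B₁⟩
  · exact absurd (card_le_one_of_subset_leafFinset_leaf hX₁) hX1
  rcases T₂ with b₂ | ⟨A₂, B₂⟩
  · exact absurd (card_le_one_of_subset_leafFinset_leaf hX₂) hX1
  have recurse : ∀ {U₁ U₂ : RTree L} {Y : Finset L} {c : ℝ}, U₁.IsPhylo → U₂.IsPhylo →
      U₁.height + U₂.height < h → Y ⊆ U₁.leafFinset → Y ⊆ U₂.leafFinset → 0 < c →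
      c * #X ≤ #Y → HasAgreementSubtree U₁ U₂ (mastBound δ (U₁.height + U₂.height) #Y) :=
    fun hU₁ hU₂ hU hY₁ hY₂ hc hY => ih _ hU hU₁ hU₂ le_rfl
      (card_pos.1 (Nat.cast_pos.1 ((mul_pos hc (Nat.cast_pos.2 (card_pos.2 ⟨x, hx⟩))).trans_le hY)))
      hY₁ hY₂
  obtain ⟨hA₁, hB₁, hA₁B₁⟩ := isPhylo_node.1 hT₁
  obtain ⟨hA₂, hB₂, -⟩ := isPhylo_node.1 hT₂
  have hcell₁ : ∀ {U V : RTree L}, X ∩ U.leafFinset ∩ V.leafFinset ⊆ U.leafFinset :=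
    fun {_ _} => inter_subset_left.trans inter_subset_right
  simp only [height] at hh
  have hk : (0 : ℝ) ≤ #X := Nat.cast_nonneg _
  have hτ : 0 < 1 - 3 * δ := by linarith
  rcases le_card_diag_or_antidiag_or_margin hδ₀.le hT₁ hT₂ hX₁ hX₂ with
    ⟨ha, hd⟩ | ⟨hb, hc⟩ | hY | hY | hY | hY
  · exact ((recurse hA₁ hA₂ (by omega) hcell₁ inter_subset_right hδ₀ ha).pair hA₁B₁
      (recurse hB₁ hB₂ (by omega) hcell₁ inter_subset_right hδ₀ hd)).mono
      (mastBound_le_add_of_diag hδ₀ hδ (by omega) (by omega) hk ha hd)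
  · exact ((recurse hA₁ hB₂ (by omega) hcell₁ inter_subset_right hδ₀ hb).pair_swap hA₁B₁
      (recurse hB₁ hA₂ (by omega) hcell₁ inter_subset_right hδ₀ hc)).mono
      (mastBound_le_add_of_diag hδ₀ hδ (by omega) (by omega) hk hb hc)
  · exact ((recurse hA₁ hT₂ (by simp only [height]; omega) inter_subset_right
      (inter_subset_left.trans hX₂) hτ hY).of_embeds (fun _ => .left) (fun _ => id)).mono
      (mastBound_le_of_branch hδ₀ hδ (by simp only [height]; omega) hk hY)
  · exact ((recurse hB₁ hT₂ (by simp only [height]; omega) inter_subset_right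
      (inter_subset_left.trans hX₂) hτ hY).of_embeds (fun _ => .right) (fun _ => id)).mono
      (mastBound_le_of_branch hδ₀ hδ (by simp only [height]; omega) hk hY)
  · exact ((recurse hT₁ hA₂ (by simp only [height]; omega) (inter_subset_left.trans hX₁)
      inter_subset_right hτ hY).of_embeds (fun _ => id) (fun _ => .left)).mono
      (mastBound_le_of_branch hδ₀ hδ (by simp only [height]; omega) hk hY)
  · exact ((recurse hT₁ hB₂ (by simp only [height]; omega) (inter_subset_left.trans hX₁)
      inter_subset_right hτ hY).of_embeds (fun _ => id) (fun _ => .right)).mono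
      (mastBound_le_of_branch hδ₀ hδ (by simp only [height]; omega) hk hY)

theorem leafFinset_eq_of_leafSet_eq {T₁ T₂ : RTree L} (h : T₁.leafSet = T₂.leafSet) :
    T₁.leafFinset = T₂.leafFinset := by
  ext x
  exact mem_leafFinset.trans ((Set.ext_iff.1 h x).trans mem_leafFinset.symm)

theorem ClassB.mastBound_le_umast (hδ₀ : 0 < δ) (hδ : δ < 1 / 4) {m : ℕ} {T₁ T₂ : RTree L}
    (hB₁ : ClassB m T₁) (hB₂ : ClassB m T₂) (h₁ : T₁.IsPhylo) (h₂ : T₂.IsPhylo)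
    (hL : T₁.leafFinset = T₂.leafFinset) : mastBound δ (2 * m) (2 ^ m) ≤ umast T₁ T₂ := by
  obtain ⟨l₁, r₁, hu₁, hl₁, hr₁, hhl₁, hhr₁⟩ := hB₁
  obtain ⟨l₂, r₂, hu₂, -, -, hhl₂, hhr₂⟩ := hB₂
  have hR₁ := hu₁.isPhylo_iff.2 h₁
  have hcard : #(node l₁ r₁).leafFinset = 2 ^ m := by
    rw [hR₁.card_leafFinset, numLeaves_node, hl₁.numLeaves_eq, hr₁.numLeaves_eq,
      show r₁.height = l₁.height by omega, ← hhl₁, pow_succ, mul_two]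
  have hX₂ : (node l₁ r₁).leafFinset ⊆ (node l₂ r₂).leafFinset := by
    rw [hu₁.leafFinset_eq, hL, hu₂.leafFinset_eq]
  have key := hasAgreementSubtree_mastBound hδ₀ hδ (2 * m) hR₁ (hu₂.isPhylo_iff.2 h₂)
    (by simp only [height]; omega) (card_pos.1 (hcard ▸ Nat.two_pow_pos m)) subset_rfl hX₂
  rw [hcard, Nat.cast_pow, Nat.cast_ofNat] at key
  exact key.le_umast hu₁ hu₂

theorem mastBound_le_umast_of_center (hδ₀ : 0 < δ) (hδ : δ ≤ 1 / 7) {n : ℕ}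
    {x₁ Y₁ x₂ Y₂ T₁ T₂ : RTree L} (hu₁ : URel (node x₁ Y₁) T₁) (hu₂ : URel (node x₂ Y₂) T₂)
    (h₁ : T₁.IsPhylo) (h₂ : T₂.IsPhylo) (hL : T₁.leafFinset = T₂.leafFinset)
    (hx : x₁.height + x₂.height ≤ 2 * n) (hY : Y₁.height + Y₂.height ≤ 2 * n + 2)
    (hx₁ : x₁.numLeaves = 2 ^ n) (hx₂ : x₂.numLeaves = 2 ^ n) (hT₁ : T₁.numLeaves = 3 * 2 ^ n)
    (hcell : 2 ^ n ≤ 3 * #(x₁.leafFinset ∩ x₂.leafFinset)) :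
    mastBound δ (2 * n + 2) (2 ^ (n + 1)) ≤ umast T₁ T₂ := by
  have hR₁ := hu₁.isPhylo_iff.2 h₁
  have hR₂ := hu₂.isPhylo_iff.2 h₂
  obtain ⟨hx₁p, hY₁p, hx₁Y₁⟩ := isPhylo_node.1 hR₁
  obtain ⟨hx₂p, hY₂p, -⟩ := isPhylo_node.1 hR₂
  have hX : (node x₁ Y₁).leafFinset = (node x₂ Y₂).leafFinset := by
    rw [hu₁.leafFinset_eq, hL, hu₂.leafFinset_eq]
  have hY₁n : Y₁.numLeaves = 2 * 2 ^ n := by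
    have := numLeaves_node x₁ Y₁
    rw [hu₁.numLeaves_eq, hT₁, hx₁] at this
    omega
  -- inclusion–exclusion: `Y₁ ∩ Y₂` is the complement of `x₁ ∪ x₂`
  have hW : #(Y₁.leafFinset ∩ Y₂.leafFinset) = 2 ^ n + #(x₁.leafFinset ∩ x₂.leafFinset) := by
    have e₁ := card_eq_card_inter_leafFinset_add hR₂
      (hX ▸ leafFinset_node x₁ Y₁ ▸ subset_union_right)
    have e₂ := card_eq_card_inter_leafFinset_add hR₁
      (hX.symm ▸ leafFinset_node x₂ Y₂ ▸ subset_union_left)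
    rw [hY₁p.card_leafFinset, hY₁n] at e₁
    rw [hx₂p.card_leafFinset, hx₂, inter_comm x₂.leafFinset, inter_comm x₂.leafFinset] at e₂
    omega
  have hC₀ : 0 < #(x₁.leafFinset ∩ x₂.leafFinset) := by have := Nat.two_pow_pos n; omega
  have hC : (2 : ℝ) ^ n / 3 ≤ #(x₁.leafFinset ∩ x₂.leafFinset) := by
    have : ((2 ^ n : ℕ) : ℝ) ≤ 3 * #(x₁.leafFinset ∩ x₂.leafFinset) := by exact_mod_cast hcell
    push_cast at this
    linarith
  have key₁ := hasAgreementSubtree_mastBound hδ₀ (by linarith) (2 * n) hx₁p hx₂p hx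
    (card_pos.1 hC₀) inter_subset_left inter_subset_right
  have key₂ := hasAgreementSubtree_mastBound hδ₀ (by linarith) (2 * n + 2) hY₁p hY₂p hY
    (card_pos.1 (by omega)) inter_subset_left inter_subset_right
  refine ((key₁.pair hx₁Y₁ key₂).mono (mastBound_le_add_of_center hδ₀ hδ n hC ?_)).le_umast hu₁ hu₂
  rw [hW]
  push_cast
  linarith

theorem ClassC.mastBound_le_umast (hδ₀ : 0 < δ) (hδ : δ ≤ 1 / 7) {m : ℕ} {T₁ T₂ : RTree L}
    (hC₁ : ClassC m T₁) (hC₂ : ClassC m T₂) (h₁ : T₁.IsPhylo) (h₂ : T₂.IsPhylo)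
    (hL : T₁.leafFinset = T₂.leafFinset) : mastBound δ (2 * m) (2 ^ m) ≤ umast T₁ T₂ := by
  obtain ⟨a₁, b₁, c₁, hu₁, ha₁, hb₁, hc₁, hha₁, hhb₁, hhc₁⟩ := hC₁
  obtain ⟨a₂, b₂, c₂, hu₂, ha₂, hb₂, hc₂, hha₂, hhb₂, hhc₂⟩ := hC₂
  obtain ⟨n, rfl⟩ : ∃ n, m = n + 1 := ⟨a₁.height, hha₁.symm⟩
  have numLeaves_eq : ∀ {u : RTree L}, u.IsBalanced → u.height + 1 = n + 1 → u.numLeaves = 2 ^ n :=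
    fun hu hh => by rw [hu.numLeaves_eq, Nat.add_right_cancel hh]
  have hT₁ : T₁.numLeaves = 3 * 2 ^ n := by
    rw [← hu₁.numLeaves_eq, numLeaves_node, numLeaves_node, numLeaves_eq ha₁ hha₁,
      numLeaves_eq hb₁ hhb₁, numLeaves_eq hc₁ hhc₁]
    ring
  -- pigeonhole: the `2 ^ n` leaves of `a₁` meet some branch of `T₂` in a third of them
  have hcover : #a₁.leafFinset ≤ #(a₁.leafFinset ∩ a₂.leafFinset) +
      #(a₁.leafFinset ∩ b₂.leafFinset) + #(a₁.leafFinset ∩ c₂.leafFinset) := by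
    have hsub : a₁.leafFinset ⊆ a₂.leafFinset ∪ (b₂.leafFinset ∪ c₂.leafFinset) := by
      rw [← leafFinset_node, ← leafFinset_node, hu₂.leafFinset_eq, ← hL, ← hu₁.leafFinset_eq,
        leafFinset_node]
      exact subset_union_left
    have hsub' : a₁.leafFinset ⊆ a₁.leafFinset ∩ a₂.leafFinset ∪ a₁.leafFinset ∩ b₂.leafFinset ∪
        a₁.leafFinset ∩ c₂.leafFinset := by
      rw [← inter_union_distrib_left, ← inter_union_distrib_left, union_assoc]
      exact subset_inter subset_rfl hsub
    exact (card_le_card hsub').trans ((card_union_le _ _).trans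
      (add_le_add_left (card_union_le _ _) _))
  rw [(isPhylo_node.1 (hu₁.isPhylo_iff.2 h₁)).1.card_leafFinset, numLeaves_eq ha₁ hha₁] at hcover
  rw [show 2 * (n + 1) = 2 * n + 2 by ring]
  rcases (by omega : 2 ^ n ≤ 3 * #(a₁.leafFinset ∩ a₂.leafFinset) ∨
      2 ^ n ≤ 3 * #(a₁.leafFinset ∩ b₂.leafFinset) ∨
      2 ^ n ≤ 3 * #(a₁.leafFinset ∩ c₂.leafFinset)) with h | h | h
  · exact mastBound_le_umast_of_center hδ₀ hδ hu₁ hu₂ h₁ h₂ hL (by omega)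
      (by simp only [height]; omega) (numLeaves_eq ha₁ hha₁) (numLeaves_eq ha₂ hha₂) hT₁ h
  · exact mastBound_le_umast_of_center hδ₀ hδ hu₁ hu₂.rotate h₁ h₂ hL (by omega)
      (by simp only [height]; omega) (numLeaves_eq ha₁ hha₁) (numLeaves_eq hb₂ hhb₂) hT₁ h
  · exact mastBound_le_umast_of_center hδ₀ hδ hu₁ hu₂.rotate.rotate h₁ h₂ hL (by omega)
      (by simp only [height]; omega) (numLeaves_eq ha₁ hha₁) (numLeaves_eq hc₂ hhc₂) hT₁ h

end RTree

theorem one_third_sub_inv_three_mul_sqrt_two_le : 1 / 3 - 1 / (3 * Real.sqrt 2) ≤ (1 / 7 : ℝ) := by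
  have h : Real.sqrt 2 ≤ 7 / 4 := Real.sqrt_le_iff.2 ⟨by norm_num, by norm_num⟩
  have : 1 / (21 / 4) ≤ 1 / (3 * Real.sqrt 2) :=
    one_div_le_one_div_of_le (by positivity) (by linarith)
  linarith

/-- Let `δ ∈ (0, 1/3 - 1/(3√2))`,
`β := (1 + 2·log(1-3δ))/(log(1-3δ) - log δ)` and
`c := (log 3 - 1)/(log(1-3δ) - log δ)`.  If `T₁`, `T₂` are balanced unrooted binary
phylogenetic trees on the same leaf set, both in class `𝓑ₘ` or both in class `𝓒ₘ`,
then `mast{T₁,T₂} ≥ 2^{β·m - c}` (logarithms base 2). -/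
theorem stmt_14 {L : Type} (m : ℕ) (T₁ T₂ : RTree L) (δ : ℝ)
    (hδ : δ ∈ Set.Ioo (0 : ℝ) (1/3 - 1/(3 * Real.sqrt 2)))
    (h₁ : T₁.IsPhylo) (h₂ : T₂.IsPhylo)
    (hL : T₁.leafSet = T₂.leafSet)
    (hclass : (RTree.ClassB m T₁ ∧ RTree.ClassB m T₂) ∨
      (RTree.ClassC m T₁ ∧ RTree.ClassC m T₂)) :
    (2 : ℝ) ^ ((1 + 2 * Real.logb 2 (1 - 3 * δ)) /
          (Real.logb 2 (1 - 3 * δ) - Real.logb 2 δ) * m -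
        (Real.logb 2 3 - 1) / (Real.logb 2 (1 - 3 * δ) - Real.logb 2 δ))
      ≤ (RTree.umast T₁ T₂ : ℝ) := by
  classical
  obtain ⟨hδ₀, hδ⟩ := hδ
  have hδ₇ : δ ≤ 1 / 7 := hδ.le.trans one_third_sub_inv_three_mul_sqrt_two_le
  have hL' := RTree.leafFinset_eq_of_leafSet_eq hL
  rw [two_rpow_eq_mastBound hδ₀ (by linarith) m]
  rcases hclass with ⟨hB₁, hB₂⟩ | ⟨hC₁, hC₂⟩
  · exact hB₁.mastBound_le_umast hδ₀ (by linarith) hB₂ h₁ h₂ hL'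
  · exact hC₁.mastBound_le_umast hδ₀ hδ₇ hC₂ h₁ h₂ hL'
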